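/- For every n ≥ 2: for each odd 1 ≤ i < n, the projection of the maelstrom word M_n to {x_i, x_{i+1}} equals x_{i+1} x_i x_{i+1} x_i; for each even 2 ≤ i < n, the projection to {x_i, x_{i+1}} equals x_i x_{i+1} x_i x_{i+1}; and for each 1 ≤ i < j ≤ n with j − i ≥ 2, the projection to {x_i, x_j} equals x_j x_i² x_j. -/

import Mathlib

/-!
Passing from `M n` to `M (n+1)` adds two copies of `x_{n+1}` and moves the copy of `xₙ` that
sits at one end of `M n`. So erasing `x_{n+1}` from `M (n+1)` gives back `M n`, and erasing `xₙ`
gives `x_{n+1} · (M n without xₙ) · x_{n+1}`. By the first fact a projection to two letters of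
index `≤ m` is the same in every `M n` with `n ≥ m`, and every letter occurs exactly twice; by the
second, `x_{n+1} xᵢ² x_{n+1}` is the projection for `i < n`. The projection to `{xₙ, x_{n+1}}` is
read off the explicit step.
-/

/-- The maelstrom words: `M 1 = x₁²`; if `k` is odd and `M k = m · xₖ` then
`M (k+1) = x_{k+1} · m · x_{k+1} · xₖ`; if `k` is even and `M k = xₖ · m'` then
`M (k+1) = xₖ · x_{k+1} · m' · x_{k+1}`. -/
def maelW : ℕ → List ℕ
  | 0 => []
  | 1 => [1, 1]
  | (k+2) =>
    if (k+1) % 2 = 1 then (k+2) :: ((maelW (k+1)).dropLast ++ [k+2, k+1])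
    else (k+1) :: (k+2) :: ((maelW (k+1)).tail ++ [k+2])

/-- Projection of a word to the two variables `i`, `j` (deleting all other letters). -/
def proj2 (u : List ℕ) (i j : ℕ) : List ℕ := u.filter (fun a => a == i || a == j)

section Projection

variable {u v : List ℕ} {i j : ℕ}

theorem proj2_append : proj2 (u ++ v) i j = proj2 u i j ++ proj2 v i j :=
  List.filter_append _ _

theorem proj2_filter {p : ℕ → Bool} (hi : p i) (hj : p j) :
    proj2 (u.filter p) i j = proj2 u i j := by
  rw [proj2, List.filter_filter]
  refine List.filter_congr fun a _ => ?_
  by_cases ha : a = i ∨ a = j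
  · rcases ha with rfl | rfl <;> simp [*]
  · simp_all

theorem proj2_eq_replicate_of_not_mem (hj : j ∉ u) :
    proj2 u i j = List.replicate (u.count i) i := by
  rw [proj2, ← List.filter_beq]
  refine List.filter_congr fun a ha => ?_
  have : a ≠ j := fun h => hj (h ▸ ha)
  simp [this]

theorem proj2_cons_left : proj2 (i :: u) i j = i :: proj2 u i j := by
  simp [proj2]

theorem proj2_cons_right : proj2 (j :: u) i j = j :: proj2 u i j := by
  simp [proj2]

end Projection

theorem maelW_odd_step {n : ℕ} (hn : Odd n) :
    ∃ w, maelW n = w ++ [n] ∧ maelW (n + 1) = (n + 1) :: (w ++ [n + 1, n]) := by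
  obtain ⟨m, rfl⟩ := hn
  obtain ⟨w, hw⟩ : ∃ w, maelW (2 * m + 1) = w ++ [2 * m + 1] := by
    rcases m with _ | m
    · exact ⟨[1], rfl⟩
    · rw [show 2 * (m + 1) + 1 = 2 * m + 1 + 2 by ring, maelW, if_neg (by omega)]
      exact ⟨_ :: _ :: _, rfl⟩
  refine ⟨w, hw, ?_⟩
  rw [show 2 * m + 1 + 1 = 2 * m + 2 by ring, maelW, if_pos (by omega), hw, List.dropLast_concat]

theorem maelW_even_step {n : ℕ} (hn : Even n) (h0 : n ≠ 0) :
    ∃ w, maelW n = n :: w ∧ maelW (n + 1) = n :: (n + 1) :: (w ++ [n + 1]) := by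
  obtain ⟨m, rfl⟩ : ∃ m, n = 2 * m + 2 := ⟨n / 2 - 1, by rcases hn with ⟨r, rfl⟩; omega⟩
  refine ⟨(maelW (2 * m + 2)).tail, ?_, ?_⟩
  · rw [maelW, if_pos (by omega)]; rfl
  · rw [show 2 * m + 2 + 1 = 2 * m + 1 + 2 by ring, maelW, if_neg (by omega)]

theorem maelW_succ_filter_ne (n : ℕ) :
    (maelW (n + 1)).filter (· ≠ n) = (n + 1) :: ((maelW n).filter (· ≠ n) ++ [n + 1]) := by
  rcases Nat.even_or_odd n with hn | hn
  · rcases eq_or_ne n 0 with rfl | h0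
    · rfl
    obtain ⟨w, hw, hw'⟩ := maelW_even_step hn h0
    simp [hw, hw']
  · obtain ⟨w, hw, hw'⟩ := maelW_odd_step hn
    simp [hw, hw']

theorem le_of_mem_maelW {n a : ℕ} (ha : a ∈ maelW n) : a ≤ n := by
  induction n generalizing a with
  | zero => simp [maelW] at ha
  | succ n ih =>
    by_cases han : a = n
    · omega
    have : a ∈ (maelW (n + 1)).filter (· ≠ n) := List.mem_filter.2 ⟨ha, by simpa⟩
    rw [maelW_succ_filter_ne] at this
    simp only [List.mem_cons, List.mem_append, List.mem_filter, List.not_mem_nil, or_false] at this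
    rcases this with rfl | ⟨ha', -⟩ | rfl
    exacts [le_rfl, (ih ha').trans n.le_succ, le_rfl]

theorem maelW_succ_filter_le (n : ℕ) : (maelW (n + 1)).filter (· ≤ n) = maelW n := by
  have hle : ∀ a ∈ maelW n, decide (a ≤ n) = true := fun a ha => by simpa using le_of_mem_maelW ha
  rcases Nat.even_or_odd n with hn | hn
  · rcases eq_or_ne n 0 with rfl | h0
    · rfl
    obtain ⟨w, hw, hw'⟩ := maelW_even_step hn h0
    rw [hw] at hle
    simp [hw, hw', List.filter_eq_self.2 fun a ha => hle a (List.mem_cons_of_mem _ ha)]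
  · obtain ⟨w, hw, hw'⟩ := maelW_odd_step hn
    rw [hw] at hle
    simp [hw, hw', List.filter_eq_self.2 fun a ha => hle a (List.mem_append_left _ ha)]

theorem count_maelW {n k : ℕ} (hk : 1 ≤ k) (hkn : k ≤ n) : (maelW n).count k = 2 := by
  induction n with
  | zero => omega
  | succ n ih =>
    rcases Nat.lt_or_ge k (n + 1) with hkn' | hkn'
    · rw [← List.count_filter (p := (· ≤ n)) (by simpa using Nat.le_of_lt_succ hkn'),
        maelW_succ_filter_le, ih (by omega)]
    · obtain rfl : k = n + 1 := by omega
      have hnot : n + 1 ∉ maelW n := fun h => (le_of_mem_maelW h).not_gt n.lt_succ_self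
      rw [← List.count_filter (p := (· ≠ n)) (by simp), maelW_succ_filter_ne]
      simp [List.count_eq_zero_of_not_mem hnot]

theorem proj2_maelW_of_lt {n i j : ℕ} (hi : 1 ≤ i) (hin : i ≤ n) (hnj : n < j) :
    proj2 (maelW n) i j = [i, i] := by
  rw [proj2_eq_replicate_of_not_mem fun h => (le_of_mem_maelW h).not_gt hnj, count_maelW hi hin]
  rfl

theorem proj2_maelW_of_le {m n i j : ℕ} (hi : i ≤ m) (hj : j ≤ m) (hmn : m ≤ n) :
    proj2 (maelW n) i j = proj2 (maelW m) i j := by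
  induction n, hmn using Nat.le_induction with
  | base => rfl
  | succ n hmn ih =>
    rw [← ih, ← proj2_filter (p := (· ≤ n)) (by simp; omega) (by simp; omega),
      maelW_succ_filter_le]

theorem proj2_maelW_succ_of_lt {n i : ℕ} (hi : 1 ≤ i) (hin : i < n) :
    proj2 (maelW (n + 1)) i (n + 1) = [n + 1, i, i, n + 1] := by
  rw [← proj2_filter (p := (· ≠ n)) (by simp; omega) (by simp), maelW_succ_filter_ne,
    proj2_cons_right, proj2_append, proj2_filter (by simp; omega) (by simp),
    proj2_maelW_of_lt hi hin.le (by omega)]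
  simp [proj2]

theorem proj2_maelW_succ_of_odd {n : ℕ} (hn : Odd n) :
    proj2 (maelW (n + 1)) n (n + 1) = [n + 1, n, n + 1, n] := by
  obtain ⟨w, hw, hw'⟩ := maelW_odd_step hn
  have hproj : proj2 w n (n + 1) ++ [n] = [n, n] := by
    rw [← proj2_maelW_of_lt hn.pos le_rfl n.lt_succ_self, hw, proj2_append]
    simp [proj2]
  rw [hw', proj2_cons_right, proj2_append, List.append_cancel_right (cs := [n]) hproj]
  simp [proj2]

theorem proj2_maelW_succ_of_even {n : ℕ} (hn : Even n) (h0 : n ≠ 0) :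
    proj2 (maelW (n + 1)) n (n + 1) = [n, n + 1, n, n + 1] := by
  obtain ⟨w, hw, hw'⟩ := maelW_even_step hn h0
  have hproj : n :: proj2 w n (n + 1) = [n, n] := by
    rw [← proj2_maelW_of_lt (Nat.pos_of_ne_zero h0) le_rfl n.lt_succ_self, hw, proj2_cons_left]
  rw [hw', proj2_cons_left, proj2_cons_right, proj2_append, (List.cons_inj_right n).1 hproj]
  simp [proj2]

theorem maelW_projections_general (n : ℕ) :
    (∀ i : ℕ, 1 ≤ i → i < n → Odd i → proj2 (maelW n) i (i+1) = [i+1, i, i+1, i]) ∧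
    (∀ i : ℕ, 2 ≤ i → i < n → Even i → proj2 (maelW n) i (i+1) = [i, i+1, i, i+1]) ∧
    (∀ i j : ℕ, 1 ≤ i → i < j → j ≤ n → 2 ≤ j - i →
      proj2 (maelW n) i j = [j, i, i, j]) := by
  refine ⟨fun i _ hin hi => ?_, fun i hi2 hin hi => ?_, fun i j hi hij hjn hji => ?_⟩
  · rw [proj2_maelW_of_le (m := i + 1) (by omega) le_rfl hin]
    exact proj2_maelW_succ_of_odd hi
  · rw [proj2_maelW_of_le (m := i + 1) (by omega) le_rfl hin]
    exact proj2_maelW_succ_of_even hi (by omega)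
  · obtain ⟨m, rfl⟩ : ∃ m, j = m + 1 := ⟨j - 1, by omega⟩
    rw [proj2_maelW_of_le (m := m + 1) hij.le le_rfl hjn]
    exact proj2_maelW_succ_of_lt hi (by omega)

/-- For every `n ≥ 2`: for odd `1 ≤ i < n`, `M n[xᵢ,x_{i+1}] = x_{i+1} xᵢ x_{i+1} xᵢ`;
for even `2 ≤ i < n`, `M n[xᵢ,x_{i+1}] = xᵢ x_{i+1} xᵢ x_{i+1}`; and for
`1 ≤ i < j ≤ n` with `j - i ≥ 2`, `M n[xᵢ,xⱼ] = xⱼ xᵢ² xⱼ`. -/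
theorem maelW_projections (n : ℕ) (hn : 2 ≤ n) :
    (∀ i : ℕ, 1 ≤ i → i < n → Odd i → proj2 (maelW n) i (i+1) = [i+1, i, i+1, i]) ∧
    (∀ i : ℕ, 2 ≤ i → i < n → Even i → proj2 (maelW n) i (i+1) = [i, i+1, i, i+1]) ∧
    (∀ i j : ℕ, 1 ≤ i → i < j → j ≤ n → 2 ≤ j - i →
      proj2 (maelW n) i j = [j, i, i, j]) :=
  maelW_projections_general n
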